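/- If L_i(v) = L_j(v') (both defined, i.e., equal to some physical address), then Virt2Mask(v) = Virt2Mask(v'), where Virt2Mask(x) = ((x - vstart) mod len) + vstart. That is, functional equivalence of addresses under two Oreo layouts implies equality of their masked addresses. -/

import Mathlib

def Layout (vstart pstart len i v : ℕ) : Option ℕ :=
  if vstart + i * len ≤ v ∧ v < vstart + (i + 1) * len then
    some (pstart + (v - (vstart + i * len)))
  else none

def Virt2Mask (vstart len x : ℕ) : ℕ := ((x - vstart) % len) + vstart

/-! The mask of `v` is `vstart` plus the offset of `v` inside its slot, and that offset is exactly
what a layout adds to `pstart`; so equal physical addresses force equal masks, whatever the slots. -/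

theorem layout_eq_some_iff {vstart pstart len i v p : ℕ} :
    Layout vstart pstart len i v = some p ↔
      ∃ r < len, v = vstart + i * len + r ∧ p = pstart + r := by
  unfold Layout
  constructor
  · intro h
    split_ifs at h with hv
    obtain ⟨hv_ge, hv_lt⟩ := hv
    rw [add_one_mul] at hv_lt
    exact ⟨v - (vstart + i * len), by omega, by omega, (Option.some.inj h).symm⟩
  · rintro ⟨r, hr, rfl, rfl⟩
    rw [if_pos ⟨by omega, by rw [add_one_mul]; omega⟩]
    simp

theorem virt2Mask_add_mul_add {vstart len r : ℕ} (i : ℕ) (hr : r < len) :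
    Virt2Mask vstart len (vstart + i * len + r) = r + vstart := by
  rw [Virt2Mask, add_assoc, Nat.add_sub_cancel_left, mul_comm, Nat.mul_add_mod,
    Nat.mod_eq_of_lt hr]

theorem virt2Mask_of_layout_eq_some {vstart pstart len i v p : ℕ}
    (h : Layout vstart pstart len i v = some p) :
    Virt2Mask vstart len v = p - pstart + vstart := by
  obtain ⟨r, hr, rfl, rfl⟩ := layout_eq_some_iff.mp h
  rw [virt2Mask_add_mul_add i hr, Nat.add_sub_cancel_left]

theorem layout_eq_implies_mask_eq_general (vstart pstart len : ℕ)
    (i j : ℕ) (v v' p : ℕ)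
    (h : Layout vstart pstart len i v = some p ∧
         Layout vstart pstart len j v' = some p) :
    Virt2Mask vstart len v = Virt2Mask vstart len v' := by
  rw [virt2Mask_of_layout_eq_some h.1, virt2Mask_of_layout_eq_some h.2]

theorem layout_eq_implies_mask_eq (vstart pstart len N : ℕ) (hlen : 0 < len)
    (i j : ℕ) (hi : i < N) (hj : j < N) (v v' p : ℕ)
    (h : Layout vstart pstart len i v = some p ∧
         Layout vstart pstart len j v' = some p) :
    Virt2Mask vstart len v = Virt2Mask vstart len v' :=
  layout_eq_implies_mask_eq_general vstart pstart len i j v v' p h
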